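/- Let q = ν₀/ν_min > 1, let k̂(t) = (ν_min−ν₀)/(ν₀+ν_min(t−1)), and define f̂ⁱ(t) = −(2−t)(1+k̂(t))²/((1+k̂(t))²+2(1+k̂(t)(1−t))). Then f̂ⁱ is continuous and strictly monotonically increasing on (1,2), f̂ⁱ(2) = 0, and hence for any δ with f̂ⁱ(1) < δ < 0 there is a unique σ ∈ (1,2) with f̂ⁱ(σ) = δ. -/
import Mathlib


noncomputable section

/-- `k̂(t) = (ν_min − ν₀)/(ν₀ + ν_min(t−1))`. -/
def khat (νmin ν₀ t : ℝ) : ℝ := (νmin - ν₀) / (ν₀ + νmin * (t - 1))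

/-- `f̂ⁱ(t) = −(2−t)(1+k̂(t))²/((1+k̂(t))² + 2(1+k̂(t)(1−t)))`. -/
def fhat (νmin ν₀ t : ℝ) : ℝ :=
  -((2 - t) * (1 + khat νmin ν₀ t) ^ 2) /
    ((1 + khat νmin ν₀ t) ^ 2 + 2 * (1 + khat νmin ν₀ t * (1 - t)))

lemma fhat_eq (a b : ℝ) (h0 : 0 < a) (h1 : a < b) {t : ℝ} (ht : 1 ≤ t) :
    fhat a b t = a^2 * t * (t - 2) / (a^2 * t + 2*a*b*(t-1) + 2*b^2) := by
  have ht0 : (0:ℝ) < t := lt_of_lt_of_le one_pos ht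
  have hD : (0:ℝ) < b + a * (t - 1) := by nlinarith
  have hDen : (0:ℝ) < a^2*t^2 + 2*b*t*(b + a*(t-1)) := by
    have := mul_pos (mul_pos (mul_pos two_pos (h0.trans h1)) ht0) hD
    nlinarith [mul_pos (mul_pos h0 h0) (mul_pos ht0 ht0)]
  have hD' : b + a * (t - 1) ≠ 0 := ne_of_gt hD
  have hg : (0:ℝ) < a^2 * t + 2*a*b*(t-1) + 2*b^2 := by nlinarith
  have key : (1 + khat a b t) ^ 2 + 2 * (1 + khat a b t * (1 - t))
      = (a^2*t^2 + 2*b*t*(b + a*(t-1))) / (b + a*(t-1))^2 := by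
    unfold khat
    field_simp
    ring
  have h1k : 1 + khat a b t = a*t/(b + a*(t-1)) := by
    unfold khat; field_simp; ring
  rw [fhat, key, h1k]
  rw [div_eq_div_iff (by positivity) (ne_of_gt hg)]
  field_simp
  ring

lemma g_pos (a b : ℝ) (h0 : 0 < a) (h1 : a < b) {t : ℝ} (ht : 1 ≤ t) :
    (0:ℝ) < a^2 * t + 2*a*b*(t-1) + 2*b^2 := by
  have hb : 0 < b := h0.trans h1
  have h2 : (0:ℝ) ≤ a^2*(t-1) := mul_nonneg (sq_nonneg a) (by linarith)
  have h3 : (0:ℝ) ≤ 2*a*b*(t-1) := mul_nonneg (by positivity) (by linarith)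
  nlinarith [mul_pos h0 h0, mul_pos (h0.trans h1) (h0.trans h1)]

lemma g_contOn (a b : ℝ) (h0 : 0 < a) (h1 : a < b) (s : Set ℝ) (hs : ∀ t ∈ s, (1:ℝ) ≤ t) :
    ContinuousOn (fun t : ℝ => a^2 * t * (t - 2) / (a^2 * t + 2*a*b*(t-1) + 2*b^2)) s := by
  apply ContinuousOn.div (by fun_prop) (by fun_prop)
  exact fun t ht => ne_of_gt (g_pos a b h0 h1 (hs t ht))

lemma fhat_strictMono (a b : ℝ) (h0 : 0 < a) (h1 : a < b) :
    StrictMonoOn (fhat a b) (Set.Icc 1 2) := by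
  intro x hx y hy hxy
  rw [fhat_eq a b h0 h1 hx.1, fhat_eq a b h0 h1 hy.1]
  rw [div_lt_div_iff₀ (g_pos a b h0 h1 hx.1) (g_pos a b h0 h1 hy.1)]
  have hxy' : 0 < y - x := by linarith
  have hx1 : 1 ≤ x := hx.1
  have hy1 : 1 < y := lt_of_le_of_lt hx.1 hxy
  have p1 : 0 < a^2 * (a^2 * (x*y) * (y-x)) := by positivity
  have hb : 0 < b := h0.trans h1
  have hq : (0:ℝ) < (x-1)*(y-1)+1 := by nlinarith
  have p2 : 0 < a^2 * (2*a*b * (y-x) * ((x-1)*(y-1)+1)) :=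
    mul_pos (pow_pos h0 2) (mul_pos (mul_pos (by positivity) hxy') hq)
  have p3 : 0 ≤ a^2 * (2*b^2 * (y-x) * (x+y-2)) :=
    mul_nonneg (sq_nonneg a) (mul_nonneg (mul_nonneg (by positivity) hxy'.le) (by linarith))
  nlinarith [p1, p2, p3]

/-- for `0 < ν_min < ν₀`, the function `f̂ⁱ` is continuous and
strictly increasing on `(1,2)`, `f̂ⁱ(2) = 0`, and for any `δ` with
`f̂ⁱ(1) < δ < 0` there is a unique `σ ∈ (1,2)` with `f̂ⁱ(σ) = δ`. -/
theorem fhat_monotone_root (νmin ν₀ : ℝ) (h0 : 0 < νmin) (h1 : νmin < ν₀) :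
    ContinuousOn (fhat νmin ν₀) (Set.Ioo 1 2) ∧
    StrictMonoOn (fhat νmin ν₀) (Set.Ioo 1 2) ∧
    fhat νmin ν₀ 2 = 0 ∧
    ∀ δ : ℝ, fhat νmin ν₀ 1 < δ → δ < 0 →
      ∃! σ : ℝ, σ ∈ Set.Ioo (1:ℝ) 2 ∧ fhat νmin ν₀ σ = δ := by
  have hcIcc : ContinuousOn (fhat νmin ν₀) (Set.Icc 1 2) := by
    apply ContinuousOn.congr (g_contOn νmin ν₀ h0 h1 _ (fun t ht => ht.1))
    exact fun t ht => fhat_eq νmin ν₀ h0 h1 ht.1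
  have hmono := fhat_strictMono νmin ν₀ h0 h1
  have h2 : fhat νmin ν₀ 2 = 0 := by norm_num [fhat]
  refine ⟨hcIcc.mono Set.Ioo_subset_Icc_self,
    hmono.mono Set.Ioo_subset_Icc_self, h2, fun δ hδ1 hδ2 => ?_⟩
  have hsub := intermediate_value_Ioo (by norm_num : (1:ℝ) ≤ 2) hcIcc
  have hδ : δ ∈ Set.Ioo (fhat νmin ν₀ 1) (fhat νmin ν₀ 2) := by
    rw [h2]; exact ⟨hδ1, hδ2⟩
  obtain ⟨σ, hσ, hfσ⟩ := hsub hδ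
  refine ⟨σ, ⟨hσ, hfσ⟩, fun τ hτ => ?_⟩
  exact (hmono.injOn) (Set.Ioo_subset_Icc_self hτ.1) (Set.Ioo_subset_Icc_self hσ)
    (hτ.2.trans hfσ.symm)

end
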